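/- In the Artin braid group B_n, define e_{k,l} = a_{k,l}a_{k+1,l}^{-1} where a_{i,j} = σ_{j-1}⋯σ_i. Then the elements e_{2,n}, e_{3,n-1}, …, e_{r(n),s(n)} are pairwise commutative, where r(n)=n/2, s(n)=(n+4)/2 if n is even and r(n)=(n+1)/2, s(n)=(n+3)/2 if n is odd. -/

import Mathlib

/-! Conjugation by `w = a_{k+1,l}` shifts `σ_{j+1}` down to `σ_j` for `k < j < l - 1` (braid relation
once, then far commutativity), and `e_{k,l} = w σ_k w⁻¹`. So `e_{k,l}` commutes with `σ_j` because
`σ_{j+1}` commutes with `σ_k`. For `k < l ≤ (n+1)/2` every letter `σ_t` of `e_{l,n+2-l}` has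
`k < t < n+1-k`, hence commutes with `e_{k,n+2-k}`. -/

/-- `a_{i,j} = σ_{j-1} σ_{j-2} ⋯ σ_i`. -/
def aWord {G : Type*} [Group G] (σ : ℕ → G) (i j : ℕ) : G :=
  ((List.range (j - i)).map (fun t => σ (j - 1 - t))).prod

/-- `e_{k,l} = a_{k,l} a_{k+1,l}⁻¹`. -/
def eWord {G : Type*} [Group G] (σ : ℕ → G) (k l : ℕ) : G :=
  aWord σ k l * (aWord σ (k + 1) l)⁻¹

section Words

variable {G : Type*} [Group G] (σ : ℕ → G)

lemma aWord_of_le {i j : ℕ} (h : j ≤ i) : aWord σ i j = 1 := by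
  simp [aWord, Nat.sub_eq_zero_of_le h]

lemma aWord_succ {i j : ℕ} (h : i ≤ j) : aWord σ i (j + 1) = σ j * aWord σ i j := by
  obtain ⟨d, rfl⟩ := Nat.exists_eq_add_of_le h
  rw [aWord, aWord, show i + d + 1 - i = d + 1 by omega, Nat.add_sub_cancel_left,
    List.range_succ_eq_map, List.map_cons, List.prod_cons, List.map_map, Nat.add_sub_cancel]
  congr 2
  exact List.map_congr_left fun t _ => by simp only [Function.comp_apply]; congr 1; omega

lemma aWord_eq_aWord_succ_mul {i j : ℕ} (h : i < j) : aWord σ i j = aWord σ (i + 1) j * σ i := by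
  obtain ⟨d, rfl⟩ := Nat.exists_eq_add_of_lt h
  simp only [aWord, show i + d + 1 - i = d + 1 by omega, show i + d + 1 - (i + 1) = d by omega,
    List.range_succ, List.map_append, List.prod_append, List.map_cons, List.map_nil,
    List.prod_cons, List.prod_nil, mul_one]
  congr 2
  omega

lemma eWord_eq_conj {k l : ℕ} (h : k < l) :
    eWord σ k l = aWord σ (k + 1) l * σ k * (aWord σ (k + 1) l)⁻¹ := by
  rw [eWord, aWord_eq_aWord_succ_mul σ h]

lemma Commute.aWord_right {g : G} {i j : ℕ} (h : ∀ t, i ≤ t → t < j → Commute g (σ t)) :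
    Commute g (aWord σ i j) := by
  induction j with
  | zero => simp [aWord_of_le σ (Nat.zero_le i)]
  | succ j ih =>
    rcases le_or_gt i j with hij | hji
    · rw [aWord_succ σ hij]
      exact (h j hij j.lt_succ_self).mul_right (ih fun t hit htj => h t hit (by omega))
    · simp [aWord_of_le σ hji]

lemma Commute.eWord_right {g : G} {i j : ℕ} (h : ∀ t, i ≤ t → t < j → Commute g (σ t)) :
    Commute g (eWord σ i j) :=
  (Commute.aWord_right σ h).mul_right
    (Commute.aWord_right σ fun t hit htj => h t (by omega) htj).inv_right

end Words

section Braid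

variable {G : Type*} [Group G] {n : ℕ} {σ : ℕ → G}

lemma semiconjBy_aWord
    (hcomm : ∀ i j : ℕ, 1 ≤ i → i + 1 < j → j ≤ n - 1 → σ i * σ j = σ j * σ i)
    (hbraid : ∀ i : ℕ, 1 ≤ i → i + 1 ≤ n - 1 →
      σ i * σ (i + 1) * σ i = σ (i + 1) * σ i * σ (i + 1))
    {m j l : ℕ} (hm : 1 ≤ m) (hmj : m ≤ j) (hjl : j + 2 ≤ l) (hln : l ≤ n) :
    SemiconjBy (aWord σ m l) (σ (j + 1)) (σ j) := by
  induction l, hjl using Nat.le_induction with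
  | base =>
    have hfar : Commute (aWord σ m j) (σ (j + 1)) :=
      (Commute.aWord_right σ fun t hmt htj =>
        (hcomm t (j + 1) (by omega) (by omega) (by omega)).symm).symm
    have hrel : SemiconjBy (σ (j + 1) * σ j) (σ (j + 1)) (σ j) := by
      simpa only [SemiconjBy, mul_assoc] using (hbraid j (by omega) (by omega)).symm
    rw [aWord_succ σ (by omega), aWord_succ σ hmj, ← mul_assoc]
    exact hrel.mul_left hfar
  | succ l hjl ih =>
    rw [aWord_succ σ (by omega)]
    exact SemiconjBy.mul_left (hcomm j l (by omega) (by omega) (by omega)).symm (ih (by omega))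

lemma commute_sigma_eWord
    (hcomm : ∀ i j : ℕ, 1 ≤ i → i + 1 < j → j ≤ n - 1 → σ i * σ j = σ j * σ i)
    (hbraid : ∀ i : ℕ, 1 ≤ i → i + 1 ≤ n - 1 →
      σ i * σ (i + 1) * σ i = σ (i + 1) * σ i * σ (i + 1))
    {k l j : ℕ} (hk : 1 ≤ k) (hkj : k < j) (hjl : j + 2 ≤ l) (hln : l ≤ n) :
    Commute (σ j) (eWord σ k l) := by
  set w := aWord σ (k + 1) l
  have hshift : σ j = w * σ (j + 1) * w⁻¹ :=
    eq_mul_inv_of_mul_eq (semiconjBy_aWord hcomm hbraid (by omega) hkj hjl hln).symm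
  rw [eWord_eq_conj σ (by omega), hshift, Commute.conj_iff]
  exact (hcomm k (j + 1) hk (by omega) (by omega)).symm

end Braid

/-- In the Artin braid group `B_n`, the elements `e_{2,n}, e_{3,n-1}, …, e_{r(n),s(n)}`
(that is, the `e_{k, n+2-k}` for `2 ≤ k ≤ ⌊(n+1)/2⌋`) are pairwise commutative. -/
theorem stmt_3 {G : Type*} [Group G] (n : ℕ) (σ : ℕ → G)
    (hcomm : ∀ i j : ℕ, 1 ≤ i → i + 1 < j → j ≤ n - 1 → σ i * σ j = σ j * σ i)
    (hbraid : ∀ i : ℕ, 1 ≤ i → i + 1 ≤ n - 1 →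
      σ i * σ (i + 1) * σ i = σ (i + 1) * σ i * σ (i + 1))
    (k l : ℕ) (hk : 2 ≤ k) (hkl : k < l) (hl : l ≤ (n + 1) / 2) :
    eWord σ k (n + 2 - k) * eWord σ l (n + 2 - l) =
      eWord σ l (n + 2 - l) * eWord σ k (n + 2 - k) := by
  refine (Commute.eWord_right σ fun t hlt htn => ?_).eq
  exact (commute_sigma_eWord hcomm hbraid (by omega) (by omega) (by omega) (by omega)).symm
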